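/- arXiv:1610.04472 — 2 statements merged into one kernel-verified Lean document; each statement's English description precedes it below -/
import Mathlib

section
/- Let ζ ≠ 0 and G₀ analytic on |τ| ≤ r with r > |√ζ|. Then (1/(2πi))∮_{|τ|=r} G₀(τ)·(−(τ²+ζ)/(τ²−ζ)³) dτ = (G₀''(−√ζ) − G₀''(√ζ))/(8ζ^{1/2}) + (G₀'(√ζ) + G₀'(−√ζ))/(8ζ) − a₀,₁/(4ζ), where a₀,₁ = (G₀(√ζ) − G₀(−√ζ))/(2√ζ). -/
/-!
Split the kernel into partial fractions: it is the sum of principal parts of order three at `w`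
and at `-w`. Against a function holomorphic on the disc, each term `c / (τ - a) ^ (n + 1)`
integrates to `2πi c f⁽ⁿ⁾(a) / n!`. This Cauchy formula for derivatives at an arbitrary point of
the disc follows by induction on `n` from the case `n = 0`, writing
`f z = f a + (z - a) • dslope f a z` and using that `(z - a) ^ -(n + 2)` integrates to zero.
-/

open Real Complex Metric Topology
open scoped Nat

section IteratedDeriv

variable {𝕜 E : Type*} [NontriviallyNormedField 𝕜] [NormedAddCommGroup E] [NormedSpace 𝕜 E]
  [CompleteSpace E] {f : 𝕜 → E} {p : FormalMultilinearSeries 𝕜 𝕜 E} {a : 𝕜}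

theorem HasFPowerSeriesAt.iteratedDeriv_eq_factorial_smul_coeff (hp : HasFPowerSeriesAt f p a)
    (n : ℕ) : iteratedDeriv n f a = n ! • p.coeff n := by
  obtain ⟨R, hR⟩ := hp
  rw [iteratedDeriv_eq_iteratedFDeriv, ← hR.factorial_smul 1 n]
  rfl

theorem AnalyticAt.succ_smul_iteratedDeriv_dslope (hf : AnalyticAt 𝕜 f a) (n : ℕ) :
    (n + 1) • iteratedDeriv n (dslope f a) a = iteratedDeriv (n + 1) f a := by
  obtain ⟨p, hp⟩ := hf
  rw [hp.iteratedDeriv_eq_factorial_smul_coeff,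
    hp.has_fpower_series_dslope_fslope.iteratedDeriv_eq_factorial_smul_coeff,
    FormalMultilinearSeries.coeff_fslope, smul_smul, Nat.factorial_succ]

end IteratedDeriv

section CauchyFormula

variable {E : Type*} [NormedAddCommGroup E] [NormedSpace ℂ E] {f : ℂ → E} {c a : ℂ} {R : ℝ}

theorem circleIntegrable_sub_pow_inv_smul (hR : 0 ≤ R) (hf : ContinuousOn f (sphere c R))
    (ha : a ∉ sphere c R) (n : ℕ) :
    CircleIntegrable (fun z ↦ ((z - a) ^ n)⁻¹ • f z) c R := by
  refine ContinuousOn.circleIntegrable hR (ContinuousOn.smul ?_ hf)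
  exact ((continuousOn_id.sub continuousOn_const).pow n).inv₀
    fun z hz ↦ pow_ne_zero n (sub_ne_zero.2 (ne_of_mem_of_not_mem hz ha))

variable [CompleteSpace E]

theorem DifferentiableOn.circleIntegral_sub_pow_inv_smul
    (hf : DifferentiableOn ℂ f (closedBall c R)) (ha : a ∈ ball c R) (n : ℕ) :
    ∮ z in C(c, R), ((z - a) ^ (n + 1))⁻¹ • f z = (2 * π * I / n !) • iteratedDeriv n f a := by
  induction n generalizing f with
  | zero => simpa using hf.circleIntegral_sub_inv_smul ha
  | succ n ih =>
    have hR : 0 ≤ R := dist_nonneg.trans (mem_ball.1 ha).le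
    have ha' : a ∉ sphere c R := sphere_disjoint_ball.notMem_of_mem_right ha
    have hnhds : closedBall c R ∈ 𝓝 a := closedBall_mem_nhds_of_mem ha
    have hg : DifferentiableOn ℂ (dslope f a) (closedBall c R) :=
      (differentiableOn_dslope hnhds).2 hf
    have hsplit : Set.EqOn (fun z ↦ ((z - a) ^ (n + 2))⁻¹ • f z)
        (fun z ↦ ((z - a) ^ (n + 2))⁻¹ • f a + ((z - a) ^ (n + 1))⁻¹ • dslope f a z)
        (sphere c R) := by
      intro z hz
      have hza : z - a ≠ 0 := sub_ne_zero.2 (ne_of_mem_of_not_mem hz ha')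
      simp only
      rw [← sub_add_cancel (f z) (f a), ← sub_smul_dslope, smul_add, add_comm, smul_smul,
        pow_succ, mul_inv, mul_assoc, inv_mul_cancel₀ hza, mul_one]
    have hpole : ∮ z in C(c, R), ((z - a) ^ (n + 2))⁻¹ • f a = 0 := by
      have hzpow (z : ℂ) : ((z - a) ^ (n + 2))⁻¹ = (z - a) ^ (-(n + 2 : ℤ)) := by
        rw [zpow_neg]; norm_cast
      simp only [hzpow, circleIntegral.integral_smul_const]
      rw [circleIntegral.integral_sub_zpow_of_ne (by omega), zero_smul]
    rw [circleIntegral.integral_congr hR hsplit, circleIntegral.integral_add, hpole, zero_add,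
      ih hg, ← (hf.analyticAt hnhds).succ_smul_iteratedDeriv_dslope]
    · rw [← Nat.cast_smul_eq_nsmul ℂ, smul_smul, Nat.factorial_succ]
      congr 1
      push_cast
      field_simp
    · exact circleIntegrable_sub_pow_inv_smul hR continuousOn_const ha' _
    · exact circleIntegrable_sub_pow_inv_smul hR
        (hg.continuousOn.mono sphere_subset_closedBall) ha' _

end CauchyFormula

section PrincipalPart

noncomputable def cubicPrincipalPart (a c₁ c₂ c₃ z : ℂ) : ℂ :=
  c₁ / (z - a) + c₂ / (z - a) ^ 2 + c₃ / (z - a) ^ 3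

variable {f : ℂ → ℂ} {c a : ℂ} {R : ℝ}

theorem circleIntegrable_mul_cubicPrincipalPart (hR : 0 ≤ R)
    (hf : ContinuousOn f (sphere c R)) (ha : a ∉ sphere c R) (c₁ c₂ c₃ : ℂ) :
    CircleIntegrable (fun z ↦ f z * cubicPrincipalPart a c₁ c₂ c₃ z) c R := by
  refine ContinuousOn.circleIntegrable hR ?_
  unfold cubicPrincipalPart
  fun_prop (disch := intro z hz; simpa [sub_eq_zero] using ne_of_mem_of_not_mem hz ha)

theorem circleIntegral_mul_cubicPrincipalPart
    (hf : DifferentiableOn ℂ f (closedBall c R)) (ha : a ∈ ball c R) (c₁ c₂ c₃ : ℂ) :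
    ∮ z in C(c, R), f z * cubicPrincipalPart a c₁ c₂ c₃ z =
      2 * π * I * (c₁ * f a + c₂ * deriv f a + c₃ * deriv (deriv f) a / 2) := by
  have hR : 0 ≤ R := dist_nonneg.trans (mem_ball.1 ha).le
  have hint (k : ℂ) (n : ℕ) : CircleIntegrable (fun z ↦ k * (((z - a) ^ n)⁻¹ • f z)) c R :=
    (circleIntegrable_sub_pow_inv_smul hR (hf.continuousOn.mono sphere_subset_closedBall)
      (sphere_disjoint_ball.notMem_of_mem_right ha) n).const_smul
  have hexpand : (fun z ↦ f z * cubicPrincipalPart a c₁ c₂ c₃ z) = fun z ↦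
      c₁ * (((z - a) ^ (0 + 1))⁻¹ • f z) + c₂ * (((z - a) ^ (1 + 1))⁻¹ • f z) +
        c₃ * (((z - a) ^ (2 + 1))⁻¹ • f z) := by
    ext z
    simp only [cubicPrincipalPart, smul_eq_mul]
    ring
  rw [hexpand, circleIntegral.integral_add, circleIntegral.integral_add,
    circleIntegral.integral_const_mul, circleIntegral.integral_const_mul,
    circleIntegral.integral_const_mul, hf.circleIntegral_sub_pow_inv_smul ha,
    hf.circleIntegral_sub_pow_inv_smul ha, hf.circleIntegral_sub_pow_inv_smul ha]
  · simp only [iteratedDeriv_zero, iteratedDeriv_succ, smul_eq_mul]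
    push_cast [Nat.factorial]
    ring
  exacts [hint c₁ _, hint c₂ _, (hint c₁ _).add (hint c₂ _), hint c₃ _]

theorem neg_sq_add_sq_div_sq_sub_sq_pow_three_eq {w τ : ℂ} (hw : w ≠ 0) (hτw : τ ≠ w)
    (hτw' : τ ≠ -w) :
    -(τ ^ 2 + w ^ 2) / (τ ^ 2 - w ^ 2) ^ 3 =
      cubicPrincipalPart w (-1 / (8 * w ^ 3)) (1 / (8 * w ^ 2)) (-1 / (4 * w)) τ +
        cubicPrincipalPart (-w) (1 / (8 * w ^ 3)) (1 / (8 * w ^ 2)) (1 / (4 * w)) τ := by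
  have hsub : τ - w ≠ 0 := sub_ne_zero.2 hτw
  have hadd : τ + w ≠ 0 := by rwa [← sub_neg_eq_add, sub_ne_zero]
  have hsq : τ ^ 2 - w ^ 2 = (τ - w) * (τ + w) := by ring
  simp only [cubicPrincipalPart, sub_neg_eq_add, hsq]
  field_simp
  ring

end PrincipalPart

/-- Residue evaluation of the kernel `A₁,₀(τ) = −(τ²+ζ)/(τ²−ζ)³` against an analytic
function `G₀`, giving the explicit (numerically unstable) representation of the
coefficient `a₁,₀` in the Airy-type uniform asymptotic expansion. -/
theorem second_coefficient_residue_formula (ζ w : ℂ) (r : ℝ) (G₀ : ℂ → ℂ)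
    (hζ : ζ ≠ 0) (hw : w ^ 2 = ζ) (hr : ‖w‖ < r)
    (hG : DifferentiableOn ℂ G₀ (closedBall (0 : ℂ) r)) :
    (2 * π * Complex.I)⁻¹ *
        (∮ τ in C(0, r), G₀ τ * (-(τ ^ 2 + ζ) / (τ ^ 2 - ζ) ^ 3)) =
      (deriv (deriv G₀) (-w) - deriv (deriv G₀) w) / (8 * w) +
        (deriv G₀ w + deriv G₀ (-w)) / (8 * ζ) -
        ((G₀ w - G₀ (-w)) / (2 * w)) / (4 * ζ) := by
  subst hw
  have hw0 : w ≠ 0 := by rintro rfl; simp at hζ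
  have hr0 : 0 ≤ r := (norm_nonneg w).trans hr.le
  have hmem : w ∈ ball (0 : ℂ) r := by simpa using hr
  have hmem' : -w ∈ ball (0 : ℂ) r := by simpa using hr
  have hsplit : Set.EqOn (fun τ ↦ G₀ τ * (-(τ ^ 2 + w ^ 2) / (τ ^ 2 - w ^ 2) ^ 3))
      (fun τ ↦ G₀ τ * cubicPrincipalPart w (-1 / (8 * w ^ 3)) (1 / (8 * w ^ 2)) (-1 / (4 * w)) τ +
        G₀ τ * cubicPrincipalPart (-w) (1 / (8 * w ^ 3)) (1 / (8 * w ^ 2)) (1 / (4 * w)) τ)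
      (sphere 0 r) := by
    intro τ hτ
    have hne {a : ℂ} (ha : a ∈ ball (0 : ℂ) r) : τ ≠ a :=
      ne_of_mem_of_not_mem hτ (sphere_disjoint_ball.notMem_of_mem_right ha)
    simp only [← mul_add]
    rw [neg_sq_add_sq_div_sq_sub_sq_pow_three_eq hw0 (hne hmem) (hne hmem')]
  have hint {a : ℂ} (ha : a ∈ ball (0 : ℂ) r) := circleIntegrable_mul_cubicPrincipalPart hr0
    (hG.continuousOn.mono sphere_subset_closedBall) (sphere_disjoint_ball.notMem_of_mem_right ha)
  rw [circleIntegral.integral_congr hr0 hsplit,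
    circleIntegral.integral_add (hint hmem _ _ _) (hint hmem' _ _ _),
    circleIntegral_mul_cubicPrincipalPart hG hmem, circleIntegral_mul_cubicPrincipalPart hG hmem',
    ← mul_add, ← mul_assoc, inv_mul_cancel₀ two_pi_I_ne_zero, one_mul]
  field_simp
  ring
end

section
/- For 0 < θ < π and z = cos θ, the phase f(t) = ln((((1+z)/2) − t)/(1 − t)) − ln t has critical points exactly at t± = (1 + e^{±iθ})/2, and f''(t±) = ±4i·e^{∓iθ}/sin θ. -/
open Real Complex

/-!
Write `c = (1 + z) / 2` and `E = e^{iθ}`, so that `c = (2 + E + E⁻¹) / 4`. Off the branch cuts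
`f'(t) = (c - 1) / ((1 - t)(c - t)) - 1 / t`, which vanishes exactly when `t² - 2ct + c = 0`,
a quadratic whose roots are `(1 + E^{±1}) / 2`. At such a root `(1 - t)(c - t) = (c - 1) t`, which
collapses `f''(t)` to `2 (c - t) / ((c - 1) t²) = 8 / (1 - E^{±2})`. Since `c` is invariant under
`E ↦ E⁻¹`, the computation at `t₋` is the one at `t₊` with `E` replaced by `E⁻¹`.
-/

namespace HypergeometricPhase

open Filter Topology

noncomputable def phase (c t : ℂ) : ℂ := Complex.log ((c - t) / (1 - t)) - Complex.log t

noncomputable def phaseDeriv (c t : ℂ) : ℂ := (c - 1) / ((1 - t) * (c - t)) - t⁻¹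

variable {c t : ℂ}

lemma sub_ne_zero_of_div_mem_slitPlane (hg : (c - t) / (1 - t) ∈ slitPlane) : c - t ≠ 0 :=
  fun h => zero_notMem_slitPlane (by rwa [h, zero_div] at hg)

lemma hasDerivAt_phase (ht1 : t ≠ 1) (ht : t ∈ slitPlane)
    (hg : (c - t) / (1 - t) ∈ slitPlane) : HasDerivAt (phase c) (phaseDeriv c t) t := by
  have h1t : 1 - t ≠ 0 := sub_ne_zero.2 ht1.symm
  have hct := sub_ne_zero_of_div_mem_slitPlane hg
  have hquot : HasDerivAt (fun s : ℂ => (c - s) / (1 - s)) ((c - 1) / (1 - t) ^ 2) t := by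
    refine (((hasDerivAt_id t).const_sub c).div ((hasDerivAt_id t).const_sub 1) h1t).congr_deriv ?_
    simp only [id_eq]
    ring
  refine ((hquot.clog hg).sub (hasDerivAt_log ht)).congr_deriv ?_
  simp only [phaseDeriv]
  field_simp

lemma deriv_phase_eventuallyEq (ht1 : t ≠ 1) (ht : t ∈ slitPlane)
    (hg : (c - t) / (1 - t) ∈ slitPlane) : deriv (phase c) =ᶠ[𝓝 t] phaseDeriv c := by
  have hquot : ContinuousAt (fun s : ℂ => (c - s) / (1 - s)) t :=
    (continuousAt_const.sub continuousAt_id).div (continuousAt_const.sub continuousAt_id)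
      (sub_ne_zero.2 ht1.symm)
  filter_upwards [isOpen_slitPlane.eventually_mem ht, eventually_ne_nhds ht1,
    hquot.eventually_mem (isOpen_slitPlane.mem_nhds hg)] with s hs hs1 hsg
  exact (hasDerivAt_phase hs1 hs hsg).deriv

lemma hasDerivAt_phaseDeriv (ht1 : t ≠ 1) (ht0 : t ≠ 0) (hct : c - t ≠ 0) :
    HasDerivAt (phaseDeriv c)
      (-((c - 1) * (2 * t - 1 - c)) / ((1 - t) * (c - t)) ^ 2 + (t ^ 2)⁻¹) t := by
  have hprod : HasDerivAt (fun s : ℂ => (1 - s) * (c - s)) (2 * t - 1 - c) t := by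
    refine (((hasDerivAt_id t).const_sub 1).mul ((hasDerivAt_id t).const_sub c)).congr_deriv ?_
    simp only [id_eq]
    ring
  refine (((hasDerivAt_const t (c - 1)).div hprod
    (mul_ne_zero (sub_ne_zero.2 ht1.symm) hct)).sub (hasDerivAt_inv ht0)).congr_deriv ?_
  ring

lemma deriv_phase_eq_zero_iff (ht1 : t ≠ 1) (ht : t ∈ slitPlane)
    (hg : (c - t) / (1 - t) ∈ slitPlane) :
    deriv (phase c) t = 0 ↔ t ^ 2 - 2 * c * t + c = 0 := by
  have h1t : 1 - t ≠ 0 := sub_ne_zero.2 ht1.symm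
  have hct := sub_ne_zero_of_div_mem_slitPlane hg
  have ht0 := slitPlane_ne_zero ht
  rw [(hasDerivAt_phase ht1 ht hg).deriv, phaseDeriv, sub_eq_zero, inv_eq_one_div,
    div_eq_div_iff (mul_ne_zero h1t hct) ht0]
  constructor <;> intro h <;> linear_combination -h

lemma deriv_deriv_phase_of_quadratic_eq_zero (ht1 : t ≠ 1) (ht : t ∈ slitPlane)
    (hg : (c - t) / (1 - t) ∈ slitPlane) (hc1 : c ≠ 1) (hcrit : t ^ 2 - 2 * c * t + c = 0) :
    deriv (deriv (phase c)) t = 2 * (c - t) / ((c - 1) * t ^ 2) := by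
  have hct := sub_ne_zero_of_div_mem_slitPlane hg
  have ht0 := slitPlane_ne_zero ht
  rw [((hasDerivAt_phaseDeriv ht1 ht0 hct).congr_of_eventuallyEq
    (deriv_phase_eventuallyEq ht1 ht hg)).deriv]
  have hprod : (1 - t) * (c - t) = (c - 1) * t := by linear_combination hcrit
  have hc1' : c - 1 ≠ 0 := sub_ne_zero.2 hc1
  rw [hprod]
  field_simp
  ring

lemma quadratic_eq_zero_iff {E : ℂ} (hE : E ≠ 0) :
    t ^ 2 - 2 * ((2 + E + E⁻¹) / 4) * t + (2 + E + E⁻¹) / 4 = 0 ↔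
      t = (1 + E) / 2 ∨ t = (1 + E⁻¹) / 2 := by
  have hfactor : t ^ 2 - 2 * ((2 + E + E⁻¹) / 4) * t + (2 + E + E⁻¹) / 4 =
      (t - (1 + E) / 2) * (t - (1 + E⁻¹) / 2) := by
    linear_combination (-1 / 4 : ℂ) * mul_inv_cancel₀ hE
  rw [hfactor, mul_eq_zero, sub_eq_zero, sub_eq_zero]

lemma one_add_div_two_mem_slitPlane {w : ℂ} (hw : w.im ≠ 0) : (1 + w) / 2 ∈ slitPlane :=
  mem_slitPlane_iff.2 (Or.inr (by simpa using hw))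

lemma inv_im_ne_zero {w : ℂ} (hw : w.im ≠ 0) : w⁻¹.im ≠ 0 := by
  have hw0 : w ≠ 0 := fun h => hw (by simp [h])
  rw [inv_im]
  exact div_ne_zero (neg_ne_zero.2 hw) (normSq_pos.2 hw0).ne'

lemma one_sub_sq_ne_zero {w : ℂ} (hw : w.im ≠ 0) : 1 - w ^ 2 ≠ 0 := by
  have hw1 : w - 1 ≠ 0 := fun h => hw (by simp [sub_eq_zero.1 h])
  have hw1' : w + 1 ≠ 0 := fun h => hw (by simp [eq_neg_of_add_eq_zero_left h])
  rw [show 1 - w ^ 2 = -((w - 1) * (w + 1)) by ring]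
  exact neg_ne_zero.2 (mul_ne_zero hw1 hw1')

lemma deriv_deriv_phase_saddle {E : ℂ} (hE : E.im ≠ 0) :
    deriv (deriv (phase ((2 + E + E⁻¹) / 4))) ((1 + E) / 2) = 8 / (1 - E ^ 2) := by
  have hE0 : E ≠ 0 := fun h => hE (by simp [h])
  have hE1 : E - 1 ≠ 0 := fun h => hE (by simp [sub_eq_zero.1 h])
  have hEE : E * E⁻¹ = 1 := mul_inv_cancel₀ hE0
  have ht1 : (1 + E) / 2 ≠ 1 := fun h => hE1 (by linear_combination 2 * h)
  have hquot : ((2 + E + E⁻¹) / 4 - (1 + E) / 2) / (1 - (1 + E) / 2) = (1 + E⁻¹) / 2 := by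
    rw [div_eq_iff (sub_ne_zero.2 ht1.symm)]
    linear_combination (1 / 4 : ℂ) * hEE
  have hc1 : (2 + E + E⁻¹) / 4 ≠ 1 := by
    intro h
    apply hE1
    have : (E - 1) ^ 2 = 0 := by linear_combination 4 * E * h - hEE
    exact pow_eq_zero_iff two_ne_zero |>.1 this
  rw [deriv_deriv_phase_of_quadratic_eq_zero ht1 (one_add_div_two_mem_slitPlane hE)
    (hquot ▸ one_add_div_two_mem_slitPlane (inv_im_ne_zero hE)) hc1
    ((quadratic_eq_zero_iff hE0).2 (Or.inl rfl))]
  have hE2 := one_sub_sq_ne_zero hE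
  have ht0 := slitPlane_ne_zero (one_add_div_two_mem_slitPlane hE)
  rw [div_eq_div_iff (mul_ne_zero (sub_ne_zero.2 hc1) (pow_ne_zero 2 ht0)) hE2]
  linear_combination -(1 + E) * hEE

end HypergeometricPhase

open HypergeometricPhase

/-- For `0 < θ < π`, `z = cos θ`, the phase `f(t) = log(((1+z)/2 − t)/(1 − t)) − log t`
has critical points exactly at `t± = (1 + e^{±iθ})/2` (among points where the logarithms
are off their branch cuts), and `f''(t±) = ±4i·e^{∓iθ}/sin θ`. -/
theorem hypergeometric_phase_saddles (θ : ℝ) (hθ0 : 0 < θ) (hθπ : θ < π) :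
    (∀ t : ℂ, t ≠ 1 → t ∈ Complex.slitPlane →
        ((((1 : ℂ) + Real.cos θ) / 2 - t) / (1 - t)) ∈ Complex.slitPlane →
        (deriv (fun t : ℂ =>
            Complex.log ((((1 : ℂ) + Real.cos θ) / 2 - t) / (1 - t)) -
              Complex.log t) t = 0 ↔
          t = (1 + Complex.exp (Complex.I * θ)) / 2 ∨
            t = (1 + Complex.exp (-Complex.I * θ)) / 2)) ∧
    deriv (deriv (fun t : ℂ =>
        Complex.log ((((1 : ℂ) + Real.cos θ) / 2 - t) / (1 - t)) - Complex.log t))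
      ((1 + Complex.exp (Complex.I * θ)) / 2) =
        4 * Complex.I * Complex.exp (-Complex.I * θ) / Real.sin θ ∧
    deriv (deriv (fun t : ℂ =>
        Complex.log ((((1 : ℂ) + Real.cos θ) / 2 - t) / (1 - t)) - Complex.log t))
      ((1 + Complex.exp (-Complex.I * θ)) / 2) =
        -(4 * Complex.I * Complex.exp (Complex.I * θ) / Real.sin θ) := by
  set E := exp (I * θ) with hE
  have hEinv : exp (-I * θ) = E⁻¹ := by rw [neg_mul, Complex.exp_neg]
  have hEim : E.im = Real.sin θ := by rw [hE, mul_comm, exp_ofReal_mul_I_im]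
  have hsin : 0 < Real.sin θ := sin_pos_of_pos_of_lt_pi hθ0 hθπ
  have hcos : (((1 : ℂ) + Real.cos θ) / 2) = (2 + E + E⁻¹) / 4 := by
    rw [ofReal_cos, Complex.cos, show (θ : ℂ) * I = I * θ by ring,
      show -(θ : ℂ) * I = -I * θ by ring, hEinv]
    ring
  have hsinE : (Real.sin θ : ℂ) = (E⁻¹ - E) * I / 2 := by
    rw [ofReal_sin, Complex.sin, show (θ : ℂ) * I = I * θ by ring,
      show -(θ : ℂ) * I = -I * θ by ring, hEinv]
  have hEim0 : E.im ≠ 0 := hEim ▸ hsin.ne'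
  have hE0 : E ≠ 0 := exp_ne_zero _
  have hsin0 : (Real.sin θ : ℂ) ≠ 0 := ofReal_ne_zero.2 hsin.ne'
  have hc_symm : (2 + E + E⁻¹) / 4 = (2 + E⁻¹ + E⁻¹⁻¹) / 4 := by rw [inv_inv]; ring
  rw [hcos, hEinv]
  refine ⟨fun t ht1 ht hg => ?_, ?_, ?_⟩
  · exact (deriv_phase_eq_zero_iff ht1 ht hg).trans (quadratic_eq_zero_iff hE0)
  · refine (deriv_deriv_phase_saddle hEim0).trans ?_
    rw [eq_div_iff hsin0, hsinE]
    field_simp [one_sub_sq_ne_zero hEim0]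
    norm_num
  · rw [hc_symm]
    refine (deriv_deriv_phase_saddle (inv_im_ne_zero hEim0)).trans ?_
    rw [hsinE]
    field_simp [one_sub_sq_ne_zero hEim0, one_sub_sq_ne_zero (inv_im_ne_zero hEim0)]
    rw [← neg_sub 1 (E ^ 2), div_neg, mul_div_cancel_right₀ _ (one_sub_sq_ne_zero hEim0)]
    norm_num
end
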